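/- Two Lüders operations Λ_A and Λ_B are coexistent if and only if A + B ≤ I or A and B are proportional (B = λA or A = λB for some 0 ≤ λ ≤ 1). -/

import Mathlib

/-!
If `Λ_A = ∑_{j ∈ J₁} X_j · X_j*`, then evaluating both sides on matrix units shows that the entries
of the `X_j` have the rank-one Gram matrix of the entries of `√A`; equality in Cauchy–Schwarz then
forces every `X_j`, `j ∈ J₁`, to be a multiple of `√A`, and `∑_{j ∈ J₁} X_j* X_j = A`.
So either all `X_j` with `j ∈ J₁ ∩ J₂` vanish, and then `A + B = ∑_{j ∈ J₁ ∪ J₂} X_j* X_j ≤ I`,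
or a nonzero `X_j` is a multiple of both `√A` and `√B`; then `√B = z √A`, where `z ≥ 0` by
comparing traces, and `B = z² A`. Conversely, `A + B ≤ I` is realised by the Kraus family
`{√A, √B}`, and `B = λ A` by `{√λ √A, √(1 - λ) √A}` with `J₁ = {0, 1}`, `J₂ = {0}`.
-/

open Matrix Kronecker
open scoped ComplexOrder

/-- A density matrix (quantum state). -/
def IsDensity {n : Type*} [Fintype n] (ρ : Matrix n n ℂ) : Prop :=
  ρ.PosSemidef ∧ ρ.trace = 1

/-- An effect: `0 ≤ A ≤ I`. -/
def IsEffect {n : Type*} [Fintype n] [DecidableEq n] (A : Matrix n n ℂ) : Prop :=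
  A.PosSemidef ∧ (1 - A).PosSemidef

/-- Complete positivity, via the existence of a finite Kraus decomposition
(equivalent to complete positivity in finite dimension). -/
def IsCP {n : Type*} [Fintype n] (Φ : Matrix n n ℂ → Matrix n n ℂ) : Prop :=
  ∃ (m : ℕ) (X : Fin m → Matrix n n ℂ), ∀ ρ, Φ ρ = ∑ k, X k * ρ * (X k)ᴴ

/-- A quantum operation: completely positive and `0 ≤ tr[Φ(ρ)] ≤ 1` on states. -/
def IsOperation {n : Type*} [Fintype n] (Φ : Matrix n n ℂ → Matrix n n ℂ) : Prop :=
  IsCP Φ ∧ ∀ ρ, IsDensity ρ → ∃ t : ℝ, (Φ ρ).trace = (t : ℂ) ∧ 0 ≤ t ∧ t ≤ 1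

/-- The Choi–Jamiolkowski operator `(Φ ⊗ I)(|ψ₊⟩⟨ψ₊|)` of a map on `d × d` matrices. -/
noncomputable def Choi {d : ℕ} (Φ : Matrix (Fin d) (Fin d) ℂ → Matrix (Fin d) (Fin d) ℂ) :
    Matrix (Fin d × Fin d) (Fin d × Fin d) ℂ :=
  ((d : ℂ))⁻¹ • ∑ j : Fin d, ∑ k : Fin d,
    (Φ (Matrix.single j k 1)) ⊗ₖ (Matrix.single j k 1)

/-- Partial trace over the first tensor factor. -/
noncomputable def ptr1 {d : ℕ} (M : Matrix (Fin d × Fin d) (Fin d × Fin d) ℂ) :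
    Matrix (Fin d) (Fin d) ℂ :=
  Matrix.of fun i j => ∑ k : Fin d, M (k, i) (k, j)

/-- Partial trace over the second tensor factor. -/
noncomputable def ptr2 {d : ℕ} (M : Matrix (Fin d × Fin d) (Fin d × Fin d) ℂ) :
    Matrix (Fin d) (Fin d) ℂ :=
  Matrix.of fun i j => ∑ k : Fin d, M (i, k) (j, k)

/-- Coexistence via a four-outcome instrument: four CP maps with trace-preserving sum,
`Φ = J₁ + J₂` and `Ψ = J₁ + J₃`. -/
def Coexistent4 {n : Type*} [Fintype n] (Φ Ψ : Matrix n n ℂ → Matrix n n ℂ) : Prop :=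
  ∃ J₁ J₂ J₃ J₄ : Matrix n n ℂ → Matrix n n ℂ,
    IsCP J₁ ∧ IsCP J₂ ∧ IsCP J₃ ∧ IsCP J₄ ∧
    (∀ ρ, IsDensity ρ → (J₁ ρ + J₂ ρ + J₃ ρ + J₄ ρ).trace = 1) ∧
    (∀ ρ, Φ ρ = J₁ ρ + J₂ ρ) ∧ (∀ ρ, Ψ ρ = J₁ ρ + J₃ ρ)

/-- Coexistence in Kraus form: a common family of Kraus operators `{X_j}` with
`∑ⱼ Xⱼ* Xⱼ ≤ I`, and index subsets realizing `Φ` and `Ψ`. -/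
def KrausCoexistent {n : Type*} [Fintype n] [DecidableEq n]
    (Φ Ψ : Matrix n n ℂ → Matrix n n ℂ) : Prop :=
  ∃ (m : ℕ) (X : Fin m → Matrix n n ℂ) (J₁ J₂ : Finset (Fin m)),
    (∀ ρ, Φ ρ = ∑ j ∈ J₁, X j * ρ * (X j)ᴴ) ∧
    (∀ ρ, Ψ ρ = ∑ j ∈ J₂, X j * ρ * (X j)ᴴ) ∧
    ((1 : Matrix n n ℂ) - ∑ j, (X j)ᴴ * X j).PosSemidef

/-- The positive semidefinite square root (as defined in Mathlib, Dec 2024). -/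
noncomputable def Matrix.PosSemidef.sqrt {n : Type*} [Fintype n] [DecidableEq n] {𝕜 : Type*} [RCLike 𝕜]
    {A : Matrix n n 𝕜} (hA : A.PosSemidef) : Matrix n n 𝕜 :=
  hA.1.eigenvectorUnitary.1 * diagonal ((↑) ∘ (fun x : ℝ => Real.sqrt x) ∘ hA.1.eigenvalues) *
  (star hA.1.eigenvectorUnitary : Matrix n n 𝕜)

namespace Matrix.PosSemidef

variable {n : Type*} [Fintype n]

lemma nonneg_of_eq_smul {M N : Matrix n n ℂ} (hM : M.PosSemidef) (hN : N.PosSemidef)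
    (hM0 : M ≠ 0) {z : ℂ} (h : N = z • M) : 0 ≤ z := by
  have htrace : z * M.trace = N.trace := by rw [h, trace_smul, smul_eq_mul]
  rw [eq_div_of_mul_eq (hM.trace_eq_zero_iff.not.mpr hM0) htrace]
  exact div_nonneg hN.trace_nonneg hM.trace_nonneg

section Sqrt

variable [DecidableEq n] {𝕜 : Type*} [RCLike 𝕜] {A : Matrix n n 𝕜}

lemma sqrt_eq_cfc (hA : A.PosSemidef) : hA.sqrt = cfc Real.sqrt A := by
  rw [hA.1.cfc_eq]; rfl

lemma posSemidef_sqrt (hA : A.PosSemidef) : hA.sqrt.PosSemidef := by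
  have hD : (diagonal ((↑) ∘ Real.sqrt ∘ hA.1.eigenvalues) : Matrix n n 𝕜).PosSemidef :=
    posSemidef_diagonal_iff.mpr fun i => RCLike.ofReal_nonneg.mpr (Real.sqrt_nonneg _)
  exact hD.mul_mul_conjTranspose_same (hA.1.eigenvectorUnitary : Matrix n n 𝕜)

lemma conjTranspose_sqrt (hA : A.PosSemidef) : hA.sqrtᴴ = hA.sqrt :=
  hA.posSemidef_sqrt.1

lemma sqrt_mul_self (hA : A.PosSemidef) : hA.sqrt * hA.sqrt = A := by
  rw [sqrt_eq_cfc, ← cfc_mul Real.sqrt Real.sqrt A, hA.1.cfc_eq]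
  conv_rhs => rw [hA.1.spectral_theorem]
  have he : (fun x => Real.sqrt x * Real.sqrt x) ∘ hA.1.eigenvalues = hA.1.eigenvalues :=
    funext fun i => Real.mul_self_sqrt (hA.eigenvalues_nonneg i)
  simp only [IsHermitian.cfc, he]

lemma sqrt_smul (hA : A.PosSemidef) {t : ℝ} (ht : 0 ≤ t) (htA : ((t : 𝕜) • A).PosSemidef) :
    htA.sqrt = (Real.sqrt t : 𝕜) • hA.sqrt := by
  have : IsSelfAdjoint A := hA.1.isSelfAdjoint
  rw [htA.sqrt_eq_cfc, hA.sqrt_eq_cfc, ← RCLike.real_smul_eq_coe_smul,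
    ← RCLike.real_smul_eq_coe_smul, ← cfc_comp_smul t Real.sqrt A]
  simp_rw [smul_eq_mul, Real.sqrt_mul ht]
  rw [cfc_const_mul (Real.sqrt t) Real.sqrt A]

end Sqrt

lemma exists_eq_smul_of_sqrt_eq_smul [DecidableEq n] {A B : Matrix n n ℂ} (hA : A.PosSemidef)
    (hB : B.PosSemidef) {z : ℂ} (h : hB.sqrt = z • hA.sqrt) :
    ∃ μ : ℝ, 0 ≤ μ ∧ B = (μ : ℂ) • A := by
  by_cases h0 : hA.sqrt = 0
  · exact ⟨0, le_rfl, by rw [← hB.sqrt_mul_self, h, h0]; simp⟩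
  have hz : 0 ≤ z := hA.posSemidef_sqrt.nonneg_of_eq_smul hB.posSemidef_sqrt h0 h
  have hz_re : z = z.re := Complex.eq_re_of_ofReal_le (by rwa [Complex.ofReal_zero])
  refine ⟨z.re * z.re, mul_nonneg (Complex.nonneg_iff.mp hz).1 (Complex.nonneg_iff.mp hz).1, ?_⟩
  rw [← hB.sqrt_mul_self, ← hA.sqrt_mul_self, h, smul_mul_smul_comm, Complex.ofReal_mul, ← hz_re]

end Matrix.PosSemidef

lemma exists_smul_eq_or_smul_eq_of_eq_smul {M : Type*} [AddCommGroup M] [Module ℂ M] {a b : M}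
    {μ : ℝ} (hμ : 0 ≤ μ) (h : b = (μ : ℂ) • a) :
    ∃ t : ℝ, 0 ≤ t ∧ t ≤ 1 ∧ (b = (t : ℂ) • a ∨ a = (t : ℂ) • b) := by
  rcases le_or_gt μ 1 with hμ1 | hμ1
  · exact ⟨μ, hμ, hμ1, Or.inl h⟩
  · refine ⟨μ⁻¹, inv_nonneg.mpr hμ, inv_le_one_of_one_le₀ hμ1.le, Or.inr ?_⟩
    rw [h, smul_smul, ← Complex.ofReal_mul, inv_mul_cancel₀ (by positivity), Complex.ofReal_one,
      one_smul]

lemma Finset.eq_zero_of_sum_mul_star_self_eq_zero {ι : Type*} {S : Finset ι} {u : ι → ℂ}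
    (h : ∑ j ∈ S, u j * star (u j) = 0) {j : ι} (hj : j ∈ S) : u j = 0 :=
  (CStarRing.mul_star_self_eq_zero_iff _).mp <|
    (Finset.sum_eq_zero_iff_of_nonneg fun j _ => mul_star_self_nonneg (u j)).mp h j hj

lemma Finset.mul_eq_mul_of_sum_mul_star_eq {ι P : Type*} {S : Finset ι} {v : P → ι → ℂ}
    {γ : P → ℂ} (h : ∀ p q, ∑ j ∈ S, v p j * star (v q j) = γ p * star (γ q)) (p q : P)
    {j : ι} (hj : j ∈ S) : v p j * γ q = v q j * γ p := by
  set u : ι → ℂ := fun j => v p j * γ q - v q j * γ p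
  have hu : ∑ j ∈ S, u j * star (u j) = 0 := by
    have expand : ∑ j ∈ S, u j * star (u j)
        = (∑ j ∈ S, v p j * star (v p j)) * (γ q * star (γ q))
          - (∑ j ∈ S, v p j * star (v q j)) * (γ q * star (γ p))
          - (∑ j ∈ S, v q j * star (v p j)) * (γ p * star (γ q))
          + (∑ j ∈ S, v q j * star (v q j)) * (γ p * star (γ p)) := by
      simp only [Finset.sum_mul, ← Finset.sum_add_distrib, ← Finset.sum_sub_distrib]
      refine Finset.sum_congr rfl fun j _ => ?_
      simp only [u, star_sub, star_mul']
      ring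
    rw [expand, h p p, h p q, h q p, h q q]
    ring
  exact sub_eq_zero.mp (Finset.eq_zero_of_sum_mul_star_self_eq_zero hu hj)

section Kraus

variable {n ι : Type*} [Fintype n] [DecidableEq n]

lemma Matrix.mul_single_mul_conjTranspose_apply (M N : Matrix n n ℂ) (k l i i' : n) :
    (M * Matrix.single k l (1 : ℂ) * Nᴴ) i i' = M i k * star (N i' l) := by
  simp [Matrix.mul_apply, Matrix.single, ite_and, Finset.sum_ite_eq]

variable {X : ι → Matrix n n ℂ} {S : Finset ι} {C : Matrix n n ℂ}

lemma sum_apply_mul_star_apply_eq_of_kraus_eq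
    (h : ∀ ρ, ∑ j ∈ S, X j * ρ * (X j)ᴴ = C * ρ * Cᴴ) (i k i' l : n) :
    ∑ j ∈ S, X j i k * star (X j i' l) = C i k * star (C i' l) := by
  simpa [Matrix.sum_apply, Matrix.mul_single_mul_conjTranspose_apply] using
    congrFun (congrFun (h (Matrix.single k l (1 : ℂ))) i) i'

lemma sum_conjTranspose_mul_self_eq_of_kraus_eq
    (h : ∀ ρ, ∑ j ∈ S, X j * ρ * (X j)ᴴ = C * ρ * Cᴴ) :
    ∑ j ∈ S, (X j)ᴴ * X j = Cᴴ * C := by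
  ext l k
  simp only [Matrix.sum_apply, Matrix.mul_apply, Matrix.conjTranspose_apply]
  rw [Finset.sum_comm]
  refine Finset.sum_congr rfl fun i _ => ?_
  simpa only [mul_comm] using sum_apply_mul_star_apply_eq_of_kraus_eq h i k i l

lemma exists_eq_smul_of_kraus_eq (h : ∀ ρ, ∑ j ∈ S, X j * ρ * (X j)ᴴ = C * ρ * Cᴴ) :
    ∃ c : ι → ℂ, ∀ j ∈ S, X j = c j • C := by
  have gram := sum_apply_mul_star_apply_eq_of_kraus_eq h
  by_cases hC : C = 0
  · refine ⟨0, fun j hj => ?_⟩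
    ext i k
    have hik := gram i k i k
    simp only [hC, Matrix.zero_apply, zero_mul] at hik
    simpa using Finset.eq_zero_of_sum_mul_star_self_eq_zero hik hj
  obtain ⟨i₀, k₀, hC₀⟩ : ∃ i₀ k₀, C i₀ k₀ ≠ 0 := by
    by_contra! hzero
    exact hC (Matrix.ext hzero)
  refine ⟨fun j => X j i₀ k₀ / C i₀ k₀, fun j hj => ?_⟩
  ext i k
  have hprop := Finset.mul_eq_mul_of_sum_mul_star_eq (v := fun p j => X j p.1 p.2)
    (γ := fun p => C p.1 p.2) (fun p q => gram p.1 p.2 q.1 q.2) (i, k) (i₀, k₀) hj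
  simp only [Matrix.smul_apply, smul_eq_mul]
  field_simp
  exact hprop

end Kraus

lemma Matrix.posSemidef_one_sub_sum_add_sum {n ι R : Type*} [Fintype n] [DecidableEq n]
    [Fintype ι] [DecidableEq ι] [CommRing R] [PartialOrder R] [StarRing R] [StarOrderedRing R]
    {X : ι → Matrix n n R} {J₁ J₂ : Finset ι} (hX : (1 - ∑ j, (X j)ᴴ * X j).PosSemidef)
    (hJ : ∀ j ∈ J₁ ∩ J₂, X j = 0) :
    (1 - (∑ j ∈ J₁, (X j)ᴴ * X j + ∑ j ∈ J₂, (X j)ᴴ * X j)).PosSemidef := by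
  have hinter : ∑ j ∈ J₁ ∩ J₂, (X j)ᴴ * X j = 0 :=
    Finset.sum_eq_zero fun j hj => by simp [hJ j hj]
  have hsplit : 1 - ∑ j ∈ J₁ ∪ J₂, (X j)ᴴ * X j
      = (1 - ∑ j, (X j)ᴴ * X j) + ∑ j ∈ (J₁ ∪ J₂)ᶜ, (X j)ᴴ * X j := by
    rw [← Finset.sum_add_sum_compl (J₁ ∪ J₂)]
    abel
  rw [← Finset.sum_union_inter, hinter, add_zero, hsplit]
  exact hX.add (posSemidef_sum _ fun j _ => posSemidef_conjTranspose_mul_self _)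

lemma ofReal_smul_mul_mul_conjTranspose {n : Type*} [Fintype n] (s : ℝ) (M ρ : Matrix n n ℂ) :
    ((s : ℂ) • M) * ρ * ((s : ℂ) • M)ᴴ = ((s * s : ℝ) : ℂ) • (M * ρ * Mᴴ) := by
  rw [conjTranspose_smul, RCLike.star_def, Complex.conj_ofReal, Matrix.smul_mul, Matrix.smul_mul,
    Matrix.mul_smul, smul_smul, Complex.ofReal_mul]

section Coexistence

variable {n : Type*} [Fintype n] [DecidableEq n]

lemma KrausCoexistent.symm {Φ Ψ : Matrix n n ℂ → Matrix n n ℂ} (h : KrausCoexistent Φ Ψ) :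
    KrausCoexistent Ψ Φ :=
  let ⟨m, X, J₁, J₂, hΦ, hΨ, hX⟩ := h
  ⟨m, X, J₂, J₁, hΨ, hΦ, hX⟩

lemma krausCoexistent_of_posSemidef_one_sub_add {M N : Matrix n n ℂ}
    (h : (1 - (Mᴴ * M + Nᴴ * N)).PosSemidef) :
    KrausCoexistent (fun ρ => M * ρ * Mᴴ) (fun ρ => N * ρ * Nᴴ) :=
  ⟨2, ![M, N], {0}, {1}, fun ρ => by simp, fun ρ => by simp, by simpa [Fin.sum_univ_two] using h⟩

lemma krausCoexistent_smul_self {M : Matrix n n ℂ} (hM : (1 - Mᴴ * M).PosSemidef) {t : ℝ}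
    (ht₀ : 0 ≤ t) (ht₁ : t ≤ 1) :
    KrausCoexistent (fun ρ => M * ρ * Mᴴ) (fun ρ => (t : ℂ) • (M * ρ * Mᴴ)) := by
  set X : Fin 2 → Matrix n n ℂ := ![(Real.sqrt t : ℂ) • M, (Real.sqrt (1 - t) : ℂ) • M]
  have hX₀ : ∀ ρ, X 0 * ρ * (X 0)ᴴ = (t : ℂ) • (M * ρ * Mᴴ) := fun ρ => by
    simp only [X, Matrix.cons_val_zero, ofReal_smul_mul_mul_conjTranspose, Real.mul_self_sqrt ht₀]
  have hX : ∀ ρ, ∑ j, X j * ρ * (X j)ᴴ = M * ρ * Mᴴ := fun ρ => by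
    rw [Fin.sum_univ_two, hX₀]
    simp only [X, Matrix.cons_val_one, Matrix.cons_val_zero]
    rw [ofReal_smul_mul_mul_conjTranspose, Real.mul_self_sqrt (sub_nonneg.mpr ht₁), ← add_smul,
      ← Complex.ofReal_add, add_sub_cancel, Complex.ofReal_one, one_smul]
  refine ⟨2, X, Finset.univ, {0}, fun ρ => (hX ρ).symm, fun ρ => ?_, ?_⟩
  · rw [Finset.sum_singleton, hX₀]
  · rwa [sum_conjTranspose_mul_self_eq_of_kraus_eq hX]

lemma krausCoexistent_sqrt_smul {A : Matrix n n ℂ} (hA : A.PosSemidef) (hA' : (1 - A).PosSemidef)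
    {t : ℝ} (ht₀ : 0 ≤ t) (ht₁ : t ≤ 1) (htA : ((t : ℂ) • A).PosSemidef) :
    KrausCoexistent (fun ρ => hA.sqrt * ρ * hA.sqrt) (fun ρ => htA.sqrt * ρ * htA.sqrt) := by
  have hmap : (fun ρ => htA.sqrt * ρ * htA.sqrt) =
      fun ρ => (t : ℂ) • (hA.sqrt * ρ * hA.sqrtᴴ) := by
    funext ρ
    calc htA.sqrt * ρ * htA.sqrt = htA.sqrt * ρ * htA.sqrtᴴ := by rw [htA.conjTranspose_sqrt]
      _ = (t : ℂ) • (hA.sqrt * ρ * hA.sqrtᴴ) := by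
        rw [hA.sqrt_smul ht₀, RCLike.ofReal_eq_complex_ofReal, ofReal_smul_mul_mul_conjTranspose,
          Real.mul_self_sqrt ht₀]
  rw [hmap]
  simpa only [hA.conjTranspose_sqrt] using krausCoexistent_smul_self (M := hA.sqrt)
    (by rwa [hA.conjTranspose_sqrt, hA.sqrt_mul_self]) ht₀ ht₁

end Coexistence

/-- two Lüders operations `Λ_A`, `Λ_B` are coexistent iff `A + B ≤ I`
or `A` and `B` are proportional (`B = λA` or `A = λB` with `0 ≤ λ ≤ 1`). -/
theorem stmt16 (d : ℕ) (A B : Matrix (Fin d) (Fin d) ℂ)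
    (hA : A.PosSemidef) (hA' : ((1 : Matrix (Fin d) (Fin d) ℂ) - A).PosSemidef)
    (hB : B.PosSemidef) (hB' : ((1 : Matrix (Fin d) (Fin d) ℂ) - B).PosSemidef) :
    KrausCoexistent (fun ρ => hA.sqrt * ρ * hA.sqrt) (fun ρ => hB.sqrt * ρ * hB.sqrt) ↔
      (((1 : Matrix (Fin d) (Fin d) ℂ) - (A + B)).PosSemidef ∨
        ∃ lam : ℝ, 0 ≤ lam ∧ lam ≤ 1 ∧ (B = (lam : ℂ) • A ∨ A = (lam : ℂ) • B)) := by
  constructor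
  · rintro ⟨m, X, J₁, J₂, hΦ, hΨ, hX⟩
    have hΦ' : ∀ ρ, ∑ j ∈ J₁, X j * ρ * (X j)ᴴ = hA.sqrt * ρ * hA.sqrtᴴ := fun ρ => by
      rw [hA.conjTranspose_sqrt]; exact (hΦ ρ).symm
    have hΨ' : ∀ ρ, ∑ j ∈ J₂, X j * ρ * (X j)ᴴ = hB.sqrt * ρ * hB.sqrtᴴ := fun ρ => by
      rw [hB.conjTranspose_sqrt]; exact (hΨ ρ).symm
    by_cases hcommon : ∃ j ∈ J₁ ∩ J₂, X j ≠ 0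
    · right
      obtain ⟨j, hj, hXj⟩ := hcommon
      rw [Finset.mem_inter] at hj
      obtain ⟨c, hc⟩ := exists_eq_smul_of_kraus_eq hΦ'
      obtain ⟨e, he⟩ := exists_eq_smul_of_kraus_eq hΨ'
      have he₀ : e j ≠ 0 := fun h => hXj (by rw [he j hj.2, h, zero_smul])
      have hBA : hB.sqrt = (c j / e j) • hA.sqrt := by
        rw [div_eq_inv_mul, mul_smul, ← hc j hj.1, he j hj.2, inv_smul_smul₀ he₀]
      obtain ⟨μ, hμ, hBA⟩ := hA.exists_eq_smul_of_sqrt_eq_smul hB hBA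
      exact exists_smul_eq_or_smul_eq_of_eq_smul hμ hBA
    · left
      push Not at hcommon
      simpa only [sum_conjTranspose_mul_self_eq_of_kraus_eq hΦ',
        sum_conjTranspose_mul_self_eq_of_kraus_eq hΨ', hA.conjTranspose_sqrt,
        hB.conjTranspose_sqrt, hA.sqrt_mul_self, hB.sqrt_mul_self] using
        posSemidef_one_sub_sum_add_sum hX hcommon
  · rintro (hAB | ⟨t, ht₀, ht₁, rfl | rfl⟩)
    · simpa only [hA.conjTranspose_sqrt, hB.conjTranspose_sqrt] using
        krausCoexistent_of_posSemidef_one_sub_add (M := hA.sqrt) (N := hB.sqrt)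
          (by rwa [hA.conjTranspose_sqrt, hB.conjTranspose_sqrt, hA.sqrt_mul_self,
            hB.sqrt_mul_self])
    · exact krausCoexistent_sqrt_smul hA hA' ht₀ ht₁ hB
    · exact (krausCoexistent_sqrt_smul hB hB' ht₀ ht₁ hA).symm
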